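/- Let G be a simple undirected graph on {1,…,n} with edge set E and degrees d_i, let S ⊆ {1,…,n}, and let A be the associated alignment matrix. Let Δ ∈ (0,1), v ∈ ℝⁿ, μ ∈ ℝ, and let b ∈ ℝⁿ be given by b_i = μ/4 for i ∈ S and b_i = 0 otherwise. Let r and c be independent random vectors in ℝⁿ with mean zero such that r_i = 0 almost surely for i ∉ S, E[r_i²] ≤ σ²/16 for i ∈ S, and E[c_i²] ≤ (σ′)²/16 for all i. Define the random vector v′ = (1 − Δ)v + Δ(Av + b + r + c). Then E‖v′ − μ𝟙‖₂² ≤ ‖v − μ𝟙‖₂² − (Δ/8) Σ_{{k,l}∈E} (v_k − v_l)²/max(d_k, d_l) − (Δ/4) Σ_{k∈S} (v_k − μ)² + (Δ²/16)( |S| σ² + n (σ′)² ), where 𝟙 ∈ ℝⁿ is the all-ones vector and each unordered edge {k,l} is counted once in the sum. -/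

import Mathlib

/-!
Write `w = v - μ𝟙`. The rows of `A` sum to `1` off `S` and to `3/4` on `S`, and `b` supplies the
missing `μ/4` on `S`, so `v' - μ𝟙 = w - Δ y + Δ (r + c)` with `y = L w + ¼ 𝟙_S w`, where `L` is
the Laplacian with edge weights `a_kl = 1 / (4 max(d_k, d_l))`. The noise is centred and `r`, `c`
are independent, so it only adds `Δ² (E‖r‖² + E‖c‖²)`. For the deterministic part,
`⟪w, L w⟫ = ½ Σ_{k,l} a_kl (w_k - w_l)²`, and Cauchy–Schwarz with row sums `Σ_l a_kl ≤ 1/4`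
gives `‖y‖² ≤ ⟪w, y⟫`; hence `‖w - Δ y‖² ≤ ‖w‖² - Δ ⟪w, y⟫` for `Δ ≤ 1`.
-/

open Finset MeasureTheory ProbabilityTheory

section WeightedLaplacian

variable {ι : Type*} [Fintype ι]

def weightedLaplacian (a : ι → ι → ℝ) (v : ι → ℝ) (i : ι) : ℝ :=
  ∑ j, a i j * (v i - v j)

theorem weightedLaplacian_sub_const (a : ι → ι → ℝ) (v : ι → ℝ) (μ : ℝ) :
    weightedLaplacian a (fun i => v i - μ) = weightedLaplacian a v := by
  ext i
  simp only [weightedLaplacian, sub_sub_sub_cancel_right]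

theorem mulVec_apply_eq_sub_weightedLaplacian [DecidableEq ι] {A : Matrix ι ι ℝ}
    {a : ι → ι → ℝ} {d : ι → ℝ} (hoff : ∀ i j, i ≠ j → A i j = a i j)
    (hdiag : ∀ i, A i i = d i - ∑ j, a i j) (ha : ∀ i, a i i = 0) (v : ι → ℝ) (i : ι) :
    A.mulVec v i = d i * v i - weightedLaplacian a v i := by
  have hA : ∀ j, A i j = a i j + if i = j then d i - ∑ k, a i k else 0 := by
    intro j
    by_cases h : i = j
    · subst h; simp [hdiag, ha]
    · simp [hoff i j h, h]
  simp only [Matrix.mulVec, dotProduct, hA, add_mul, sum_add_distrib, ite_mul, zero_mul,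
    sum_ite_eq, mem_univ, if_true, weightedLaplacian, mul_sub, sum_sub_distrib]
  rw [← sum_mul]
  ring

theorem sum_mul_weightedLaplacian {a : ι → ι → ℝ} (ha : ∀ i j, a i j = a j i)
    (w : ι → ℝ) :
    ∑ i, w i * weightedLaplacian a w i = (∑ i, ∑ j, a i j * (w i - w j) ^ 2) / 2 := by
  have hswap : ∑ i, ∑ j, a i j * ((w i - w j) * w i)
      = ∑ i, ∑ j, a i j * ((w j - w i) * w j) := by
    rw [sum_comm]
    exact sum_congr rfl fun j _ => sum_congr rfl fun i _ => by rw [ha]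
  have hsq : ∑ i, ∑ j, a i j * (w i - w j) ^ 2
      = ∑ i, ∑ j, a i j * ((w i - w j) * w i) + ∑ i, ∑ j, a i j * ((w j - w i) * w j) := by
    rw [← sum_add_distrib]
    refine sum_congr rfl fun i _ => ?_
    rw [← sum_add_distrib]
    exact sum_congr rfl fun j _ => by ring
  rw [hsq, ← hswap, add_self_div_two]
  refine sum_congr rfl fun i _ => ?_
  rw [weightedLaplacian, mul_sum]
  exact sum_congr rfl fun j _ => by ring

theorem sum_weightedLaplacian_sq_le {a : ι → ι → ℝ} {κ : ℝ} (ha : ∀ i j, 0 ≤ a i j)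
    (hrow : ∀ i, ∑ j, a i j ≤ κ) (w : ι → ℝ) :
    ∑ i, weightedLaplacian a w i ^ 2 ≤ κ * ∑ i, ∑ j, a i j * (w i - w j) ^ 2 := by
  rw [mul_sum]
  refine sum_le_sum fun i _ => ?_
  have hpos : 0 ≤ ∑ j, a i j * (w i - w j) ^ 2 :=
    sum_nonneg fun j _ => mul_nonneg (ha i j) (sq_nonneg _)
  calc weightedLaplacian a w i ^ 2
      ≤ (∑ j, a i j) * ∑ j, a i j * (w i - w j) ^ 2 :=
        sum_sq_le_sum_mul_sum_of_sq_le_mul _ (fun j _ => ha i j)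
          (fun j _ => mul_nonneg (ha i j) (sq_nonneg _)) (fun j _ => le_of_eq (by ring))
    _ ≤ κ * ∑ j, a i j * (w i - w j) ^ 2 := mul_le_mul_of_nonneg_right (hrow i) hpos

theorem sum_weightedLaplacian_add_sq_le {a : ι → ι → ℝ} {ρ : ι → ℝ}
    (ha : ∀ i j, 0 ≤ a i j) (hsymm : ∀ i j, a i j = a j i)
    (hrow : ∀ i, ∑ j, a i j ≤ 1 / 4) (hρ0 : ∀ i, 0 ≤ ρ i) (hρ1 : ∀ i, ρ i ≤ 1 / 2)
    (w : ι → ℝ) :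
    ∑ i, (weightedLaplacian a w i + ρ i * w i) ^ 2
      ≤ ∑ i, w i * (weightedLaplacian a w i + ρ i * w i) := by
  have hL := sum_weightedLaplacian_sq_le ha hrow w
  have hwL := sum_mul_weightedLaplacian hsymm w
  calc ∑ i, (weightedLaplacian a w i + ρ i * w i) ^ 2
      ≤ ∑ i, (2 * weightedLaplacian a w i ^ 2 + ρ i * w i ^ 2) :=
        sum_le_sum fun i _ => by
          nlinarith [sq_nonneg (weightedLaplacian a w i - ρ i * w i),
            mul_nonneg (mul_nonneg (hρ0 i) (sub_nonneg.2 (hρ1 i))) (sq_nonneg (w i))]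
    _ = 2 * ∑ i, weightedLaplacian a w i ^ 2 + ∑ i, ρ i * w i ^ 2 := by
        rw [sum_add_distrib, mul_sum]
    _ ≤ ∑ i, w i * weightedLaplacian a w i + ∑ i, ρ i * w i ^ 2 := by linarith
    _ = ∑ i, w i * (weightedLaplacian a w i + ρ i * w i) := by
        rw [← sum_add_distrib]
        exact sum_congr rfl fun i _ => by ring

theorem sum_sub_smul_sq_le {x y : ι → ℝ} {t : ℝ} (ht0 : 0 ≤ t) (ht1 : t ≤ 1)
    (hy : ∑ i, y i ^ 2 ≤ ∑ i, x i * y i) :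
    ∑ i, (x i - t * y i) ^ 2 ≤ ∑ i, x i ^ 2 - t * ∑ i, x i * y i := by
  have hexp : ∑ i, (x i - t * y i) ^ 2
      = ∑ i, x i ^ 2 - 2 * t * ∑ i, x i * y i + t ^ 2 * ∑ i, y i ^ 2 := by
    simp only [mul_sum, ← sum_sub_distrib, ← sum_add_distrib]
    exact sum_congr rfl fun i _ => by ring
  have hy0 : 0 ≤ ∑ i, y i ^ 2 := sum_nonneg fun i _ => sq_nonneg _
  rw [hexp]
  nlinarith [mul_le_mul_of_nonneg_left hy (sq_nonneg t), mul_nonneg ht0 (sub_nonneg.2 ht1)]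

theorem sum_sub_smul_weightedLaplacian_add_sq_le {a : ι → ι → ℝ} {ρ : ι → ℝ}
    (ha : ∀ i j, 0 ≤ a i j) (hsymm : ∀ i j, a i j = a j i)
    (hrow : ∀ i, ∑ j, a i j ≤ 1 / 4) (hρ0 : ∀ i, 0 ≤ ρ i) (hρ1 : ∀ i, ρ i ≤ 1 / 2)
    {t : ℝ} (ht0 : 0 ≤ t) (ht1 : t ≤ 1) (w : ι → ℝ) :
    ∑ i, (w i - t * (weightedLaplacian a w i + ρ i * w i)) ^ 2
      ≤ ∑ i, w i ^ 2
        - t * ((∑ i, ∑ j, a i j * (w i - w j) ^ 2) / 2 + ∑ i, ρ i * w i ^ 2) := by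
  have h := sum_sub_smul_sq_le ht0 ht1 (sum_weightedLaplacian_add_sq_le ha hsymm hrow hρ0 hρ1 w)
  have hwy : ∑ i, w i * (weightedLaplacian a w i + ρ i * w i)
      = (∑ i, ∑ j, a i j * (w i - w j) ^ 2) / 2 + ∑ i, ρ i * w i ^ 2 := by
    rw [← sum_mul_weightedLaplacian hsymm, ← sum_add_distrib]
    exact sum_congr rfl fun i _ => by ring
  rwa [hwy] at h

end WeightedLaplacian

section Noise

variable {Ω : Type*}

theorem integral_const_add_smul_add_sq [MeasureSpace Ω] [IsProbabilityMeasure (ℙ : Measure Ω)]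
    {X Y : Ω → ℝ} (hX : MemLp X 2 ℙ) (hY : MemLp Y 2 ℙ) (hXY : IndepFun X Y ℙ)
    (hX0 : ∫ ω, X ω ∂ℙ = 0) (hY0 : ∫ ω, Y ω ∂ℙ = 0) (u t : ℝ) :
    ∫ ω, (u + t * (X ω + Y ω)) ^ 2 ∂ℙ
      = u ^ 2 + t ^ 2 * (∫ ω, X ω ^ 2 ∂ℙ + ∫ ω, Y ω ^ 2 ∂ℙ) := by
  have hZ : MemLp (fun ω => t * (X ω + Y ω)) 2 ℙ := (hX.add hY).const_mul t
  have hmean : ∫ ω, (u + t * (X ω + Y ω)) ∂ℙ = u := by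
    rw [integral_add (integrable_const u) (hZ.integrable one_le_two), integral_const_mul,
      integral_add (hX.integrable one_le_two) (hY.integrable one_le_two), hX0, hY0]
    simp
  have hvar := variance_eq_sub (X := fun ω => u + t * (X ω + Y ω)) ((memLp_const u).add hZ)
  rw [variance_const_add hZ.aestronglyMeasurable, variance_const_mul,
    hXY.variance_fun_add hX hY, variance_of_integral_eq_zero hX.aemeasurable hX0,
    variance_of_integral_eq_zero hY.aemeasurable hY0] at hvar
  simp only [Pi.pow_apply] at hvar
  rw [hmean] at hvar
  linarith

theorem integral_sum_const_add_smul_add_sq [MeasureSpace Ω]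
    [IsProbabilityMeasure (ℙ : Measure Ω)] {ι : Type*} [Fintype ι] {r c : Ω → ι → ℝ}
    (hrc : IndepFun r c ℙ) (hr : ∀ i, MemLp (fun ω => r ω i) 2 ℙ)
    (hc : ∀ i, MemLp (fun ω => c ω i) 2 ℙ) (hr0 : ∀ i, ∫ ω, r ω i ∂ℙ = 0)
    (hc0 : ∀ i, ∫ ω, c ω i ∂ℙ = 0) (u : ι → ℝ) (t : ℝ) :
    ∫ ω, ∑ i, (u i + t * (r ω i + c ω i)) ^ 2 ∂ℙ
      = ∑ i, u i ^ 2
        + t ^ 2 * ∑ i, (∫ ω, r ω i ^ 2 ∂ℙ + ∫ ω, c ω i ^ 2 ∂ℙ) := by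
  have hint : ∀ i, Integrable (fun ω => (u i + t * (r ω i + c ω i)) ^ 2) ℙ := fun i =>
    ((memLp_const (u i)).add (((hr i).add (hc i)).const_mul t)).integrable_sq
  rw [integral_finsetSum _ fun i _ => hint i, mul_sum, ← sum_add_distrib]
  exact sum_congr rfl fun i _ => integral_const_add_smul_add_sq (hr i) (hc i)
    (hrc.comp (measurable_pi_apply i) (measurable_pi_apply i)) (hr0 i) (hc0 i) (u i) t

theorem sum_integral_sq_le_card_mul [MeasurableSpace Ω] {μ : Measure Ω} {ι : Type*}
    [Fintype ι] (S : Finset ι) {X : Ω → ι → ℝ} {K : ℝ}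
    (hzero : ∀ i ∉ S, ∀ᵐ ω ∂μ, X ω i = 0)
    (hle : ∀ i ∈ S, ∫ ω, X ω i ^ 2 ∂μ ≤ K) :
    ∑ i, ∫ ω, X ω i ^ 2 ∂μ ≤ S.card * K := by
  have hvanish : ∀ i ∈ univ, i ∉ S → ∫ ω, X ω i ^ 2 ∂μ = 0 := fun i _ hi =>
    integral_eq_zero_of_ae ((hzero i hi).mono fun ω h => by simp [h])
  rw [← sum_subset (subset_univ S) hvanish, ← nsmul_eq_mul, ← sum_const]
  exact sum_le_sum hle

end Noise

section AlignmentWeight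

variable {V : Type*} [Fintype V] (G : SimpleGraph V) [DecidableRel G.Adj]

noncomputable def alignWeight (i j : V) : ℝ :=
  if G.Adj i j then 1 / (4 * ((max (G.degree i) (G.degree j) : ℕ) : ℝ)) else 0

theorem alignWeight_nonneg (i j : V) : 0 ≤ alignWeight G i j := by
  unfold alignWeight
  split_ifs <;> positivity

theorem alignWeight_comm (i j : V) : alignWeight G i j = alignWeight G j i := by
  simp only [alignWeight, G.adj_comm i j, max_comm (G.degree i)]

theorem alignWeight_self (i : V) : alignWeight G i i = 0 := by
  simp [alignWeight]

theorem sum_alignWeight (i : V) :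
    ∑ j, alignWeight G i j
      = ∑ j ∈ G.neighborFinset i, 1 / (4 * ((max (G.degree i) (G.degree j) : ℕ) : ℝ)) := by
  rw [SimpleGraph.neighborFinset_eq_filter, sum_filter]
  rfl

theorem sum_alignWeight_le (i : V) : ∑ j, alignWeight G i j ≤ 1 / 4 := by
  rw [sum_alignWeight]
  calc ∑ j ∈ G.neighborFinset i, 1 / (4 * ((max (G.degree i) (G.degree j) : ℕ) : ℝ))
      ≤ ∑ _j ∈ G.neighborFinset i, 1 / (4 * (G.degree i : ℝ)) := by
        refine sum_le_sum fun j hj => ?_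
        have hpos : 0 < G.degree i :=
          G.degree_pos_iff_exists_adj i |>.2 ⟨j, (G.mem_neighborFinset i j).1 hj⟩
        gcongr
        exact_mod_cast le_max_left _ _
    _ = G.degree i * (1 / (4 * (G.degree i : ℝ))) := by
        rw [sum_const, G.card_neighborFinset_eq_degree, nsmul_eq_mul]
    _ ≤ 1 / 4 := by
        rcases Nat.eq_zero_or_pos (G.degree i) with h | h
        · simp [h]
        · rw [mul_one_div, div_mul_eq_div_div_swap, div_self (by positivity)]

theorem sum_adj_sq_div_max_degree (x : V → ℝ) :
    ∑ k, ∑ l, (if G.Adj k l then (x k - x l) ^ 2 / ((max (G.degree k) (G.degree l) : ℕ) : ℝ)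
      else 0) = 4 * ∑ k, ∑ l, alignWeight G k l * (x k - x l) ^ 2 := by
  simp only [mul_sum, alignWeight]
  exact sum_congr rfl fun k _ => sum_congr rfl fun l _ => by split_ifs <;> ring

theorem mulVec_apply_eq_sub_weightedLaplacian_alignWeight [DecidableEq V] (S : Finset V)
    {A : Matrix V V ℝ}
    (hAadj : ∀ i j, G.Adj i j → A i j = 1 / (4 * ((max (G.degree i) (G.degree j) : ℕ) : ℝ)))
    (hAoff : ∀ i j, i ≠ j → ¬ G.Adj i j → A i j = 0)
    (hAdiagOut : ∀ i ∉ S, A i i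
      = 1 - ∑ j ∈ G.neighborFinset i, 1 / (4 * ((max (G.degree i) (G.degree j) : ℕ) : ℝ)))
    (hAdiagIn : ∀ i ∈ S, A i i
      = 3 / 4 - ∑ j ∈ G.neighborFinset i, 1 / (4 * ((max (G.degree i) (G.degree j) : ℕ) : ℝ)))
    (v : V → ℝ) (i : V) :
    A.mulVec v i
      = (if i ∈ S then 3 / 4 else 1) * v i - weightedLaplacian (alignWeight G) v i := by
  refine mulVec_apply_eq_sub_weightedLaplacian (A := A) (d := fun i => if i ∈ S then 3 / 4 else 1)
    (fun i j hij => ?_) (fun i => ?_) (alignWeight_self G) v i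
  · by_cases h : G.Adj i j
    · simp [alignWeight, h, hAadj i j h]
    · simp [alignWeight, h, hAoff i j hij h]
  · rw [sum_alignWeight]
    by_cases h : i ∈ S
    · simp [h, hAdiagIn i h]
    · simp [h, hAdiagOut i h]

theorem sum_sub_smul_weightedLaplacian_alignWeight_sq_le [DecidableEq V] (S : Finset V) {t : ℝ} (ht0 : 0 ≤ t)
    (ht1 : t ≤ 1) (v : V → ℝ) (μ : ℝ) :
    ∑ i, (v i - μ - t * (weightedLaplacian (alignWeight G) v i
        + if i ∈ S then (v i - μ) / 4 else 0)) ^ 2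
      ≤ ∑ i, (v i - μ) ^ 2 - t * ((∑ i, ∑ j, alignWeight G i j * (v i - v j) ^ 2) / 2
        + (∑ k ∈ S, (v k - μ) ^ 2) / 4) := by
  have h := sum_sub_smul_weightedLaplacian_add_sq_le (alignWeight_nonneg G)
    (alignWeight_comm G) (sum_alignWeight_le G) (ρ := fun i => if i ∈ S then 1 / 4 else 0)
    (fun i => by positivity) (fun i => by split_ifs <;> norm_num) ht0 ht1 (fun i => v i - μ)
  simpa only [weightedLaplacian_sub_const, sub_sub_sub_cancel_right, ite_mul, zero_mul,
    sum_ite_mem, univ_inter, one_div_mul_eq_div, ← sum_div] using h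

end AlignmentWeight

theorem stmt14_general {Ω : Type*} [MeasureSpace Ω] [IsProbabilityMeasure (ℙ : Measure Ω)]
    (n : ℕ) (G : SimpleGraph (Fin n)) [DecidableRel G.Adj]
    (S : Finset (Fin n)) (A : Matrix (Fin n) (Fin n) ℝ)
    (hAadj : ∀ i j, G.Adj i j →
      A i j = 1 / (4 * ((max (G.degree i) (G.degree j) : ℕ) : ℝ)))
    (hAoff : ∀ i j, i ≠ j → ¬ G.Adj i j → A i j = 0)
    (hAdiagOut : ∀ i ∉ S, A i i
      = 1 - ∑ j ∈ G.neighborFinset i, 1 / (4 * ((max (G.degree i) (G.degree j) : ℕ) : ℝ)))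
    (hAdiagIn : ∀ i ∈ S, A i i
      = 3 / 4 - ∑ j ∈ G.neighborFinset i, 1 / (4 * ((max (G.degree i) (G.degree j) : ℕ) : ℝ)))
    (Δ : ℝ) (hΔ0 : 0 < Δ) (hΔ1 : Δ < 1) (v : Fin n → ℝ) (μ σ σ' : ℝ)
    (b : Fin n → ℝ) (hb : ∀ i, b i = if i ∈ S then μ / 4 else 0)
    (r c : Ω → Fin n → ℝ)
    (hIndep : IndepFun r c ℙ)
    (hrL2 : ∀ i, MemLp (fun ω => r ω i) 2 ℙ)
    (hcL2 : ∀ i, MemLp (fun ω => c ω i) 2 ℙ)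
    (hrMean : ∀ i, ∫ ω, r ω i ∂ℙ = 0) (hcMean : ∀ i, ∫ ω, c ω i ∂ℙ = 0)
    (hrZero : ∀ i ∉ S, ∀ᵐ ω ∂ℙ, r ω i = 0)
    (hrVar : ∀ i ∈ S, ∫ ω, (r ω i) ^ 2 ∂ℙ ≤ σ ^ 2 / 16)
    (hcVar : ∀ i, ∫ ω, (c ω i) ^ 2 ∂ℙ ≤ σ' ^ 2 / 16) :
    (∫ ω, ∑ i, (((1 - Δ) • v + Δ • (A.mulVec v + b + r ω + c ω)) i - μ) ^ 2 ∂ℙ)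
      ≤ ∑ i, (v i - μ) ^ 2
        - (Δ / 8) * ((1 / 2) * ∑ k, ∑ l,
            if G.Adj k l then (v k - v l) ^ 2 / ((max (G.degree k) (G.degree l) : ℕ) : ℝ) else 0)
        - (Δ / 4) * ∑ k ∈ S, (v k - μ) ^ 2
        + (Δ ^ 2 / 16) * (S.card * σ ^ 2 + n * σ' ^ 2) := by
  let y : Fin n → ℝ := fun i =>
    weightedLaplacian (alignWeight G) v i + if i ∈ S then (v i - μ) / 4 else 0
  have hstep : ∀ ω i, ((1 - Δ) • v + Δ • (A.mulVec v + b + r ω + c ω)) i - μ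
      = (v i - μ - Δ * y i) + Δ * (r ω i + c ω i) := by
    intro ω i
    simp only [Pi.add_apply, Pi.smul_apply, smul_eq_mul, hb, y,
      mulVec_apply_eq_sub_weightedLaplacian_alignWeight G S hAadj hAoff hAdiagOut hAdiagIn]
    split_ifs <;> ring
  have hdet := sum_sub_smul_weightedLaplacian_alignWeight_sq_le G S hΔ0.le hΔ1.le v μ
  have hE : 0 ≤ ∑ k, ∑ l, alignWeight G k l * (v k - v l) ^ 2 :=
    sum_nonneg fun k _ => sum_nonneg fun l _ => mul_nonneg (alignWeight_nonneg G k l) (sq_nonneg _)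
  have hr := sum_integral_sq_le_card_mul S hrZero hrVar
  have hc := sum_integral_sq_le_card_mul univ (by simp) fun i _ => hcVar i
  rw [card_univ, Fintype.card_fin] at hc
  calc (∫ ω, ∑ i, (((1 - Δ) • v + Δ • (A.mulVec v + b + r ω + c ω)) i - μ) ^ 2 ∂ℙ)
      = ∫ ω, ∑ i, ((v i - μ - Δ * y i) + Δ * (r ω i + c ω i)) ^ 2 ∂ℙ := by
        simp only [hstep]
    _ = ∑ i, (v i - μ - Δ * y i) ^ 2
          + Δ ^ 2 * ∑ i, (∫ ω, r ω i ^ 2 ∂ℙ + ∫ ω, c ω i ^ 2 ∂ℙ) :=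
        integral_sum_const_add_smul_add_sq hIndep hrL2 hcL2 hrMean hcMean _ Δ
    _ ≤ _ := by
        rw [sum_adj_sq_div_max_degree, sum_add_distrib]
        nlinarith [mul_nonneg hΔ0.le hE]

/-- one-step expected decrease for the alignment update
`v' = (1-Δ)v + Δ(Av + b + r + c)` with measurement noise `r` and communication
noise `c`.  (The sum over unordered edges is written as half the sum over
ordered adjacent pairs.) -/
theorem stmt14 {Ω : Type*} [MeasureSpace Ω] [IsProbabilityMeasure (ℙ : Measure Ω)]
    (n : ℕ) (G : SimpleGraph (Fin n)) [DecidableRel G.Adj]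
    (S : Finset (Fin n)) (A : Matrix (Fin n) (Fin n) ℝ)
    (hAadj : ∀ i j, G.Adj i j →
      A i j = 1 / (4 * ((max (G.degree i) (G.degree j) : ℕ) : ℝ)))
    (hAoff : ∀ i j, i ≠ j → ¬ G.Adj i j → A i j = 0)
    (hAdiagOut : ∀ i ∉ S, A i i
      = 1 - ∑ j ∈ G.neighborFinset i, 1 / (4 * ((max (G.degree i) (G.degree j) : ℕ) : ℝ)))
    (hAdiagIn : ∀ i ∈ S, A i i
      = 3 / 4 - ∑ j ∈ G.neighborFinset i, 1 / (4 * ((max (G.degree i) (G.degree j) : ℕ) : ℝ)))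
    (Δ : ℝ) (hΔ0 : 0 < Δ) (hΔ1 : Δ < 1) (v : Fin n → ℝ) (μ σ σ' : ℝ)
    (hσ : 0 ≤ σ) (hσ' : 0 ≤ σ')
    (b : Fin n → ℝ) (hb : ∀ i, b i = if i ∈ S then μ / 4 else 0)
    (r c : Ω → Fin n → ℝ) (hrMeas : Measurable r) (hcMeas : Measurable c)
    (hIndep : IndepFun r c ℙ)
    (hrL2 : ∀ i, MemLp (fun ω => r ω i) 2 ℙ)
    (hcL2 : ∀ i, MemLp (fun ω => c ω i) 2 ℙ)
    (hrMean : ∀ i, ∫ ω, r ω i ∂ℙ = 0) (hcMean : ∀ i, ∫ ω, c ω i ∂ℙ = 0)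
    (hrZero : ∀ i ∉ S, ∀ᵐ ω ∂ℙ, r ω i = 0)
    (hrVar : ∀ i ∈ S, ∫ ω, (r ω i) ^ 2 ∂ℙ ≤ σ ^ 2 / 16)
    (hcVar : ∀ i, ∫ ω, (c ω i) ^ 2 ∂ℙ ≤ σ' ^ 2 / 16) :
    (∫ ω, ∑ i, (((1 - Δ) • v + Δ • (A.mulVec v + b + r ω + c ω)) i - μ) ^ 2 ∂ℙ)
      ≤ ∑ i, (v i - μ) ^ 2
        - (Δ / 8) * ((1 / 2) * ∑ k, ∑ l,
            if G.Adj k l then (v k - v l) ^ 2 / ((max (G.degree k) (G.degree l) : ℕ) : ℝ) else 0)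
        - (Δ / 4) * ∑ k ∈ S, (v k - μ) ^ 2
        + (Δ ^ 2 / 16) * (S.card * σ ^ 2 + n * σ' ^ 2) :=
  stmt14_general n G S A hAadj hAoff hAdiagOut hAdiagIn Δ hΔ0 hΔ1 v μ σ σ' b hb r c hIndep hrL2 hcL2
    hrMean hcMean hrZero hrVar hcVar
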